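/- Let f, g ∈ ℚ[t] be nonzero coprime polynomials. For all sufficiently large primes p, and for all t ∈ ℚ, max(|f(t)|_p, |g(t)|_p) ≥ 1. -/
import Mathlib

open Polynomial Finset

lemma padicNorm_pow' {p : ℕ} (hp : p.Prime) (q : ℚ) (n : ℕ) :
    padicNorm p (q ^ n) = padicNorm p q ^ n := by
  have : Fact p.Prime := ⟨hp⟩
  induction n with
  | zero => simp [padicNorm.one]
  | succ n ih => rw [pow_succ, pow_succ, padicNorm.mul, ih]

lemma padicNorm_den_eq_one {p : ℕ} (hp : p.Prime) {q : ℚ} (h : q.den < p) :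
    padicNorm p (q.den : ℚ) = 1 := by
  have : Fact p.Prime := ⟨hp⟩
  rw [padicNorm.nat_eq_one_iff]
  exact fun hdvd => absurd (Nat.le_of_dvd q.pos hdvd) (not_le.mpr h)

lemma padicNorm_le_one_of_den_lt {p : ℕ} (hp : p.Prime) {q : ℚ} (h : q.den < p) :
    padicNorm p q ≤ 1 := by
  have : Fact p.Prime := ⟨hp⟩
  rw [show q = (q.num : ℚ) / (q.den : ℚ) from (Rat.num_div_den q).symm,
    padicNorm.div, padicNorm_den_eq_one hp h, div_one]
  exact padicNorm.of_int q.num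

lemma padicNorm_eq_one_of_lt {p : ℕ} (hp : p.Prime) {q : ℚ} (hq : q ≠ 0)
    (h1 : q.num.natAbs < p) (h2 : q.den < p) : padicNorm p q = 1 := by
  have : Fact p.Prime := ⟨hp⟩
  rw [show q = (q.num : ℚ) / (q.den : ℚ) from (Rat.num_div_den q).symm,
    padicNorm.div, padicNorm_den_eq_one hp h2, div_one, padicNorm.int_eq_one_iff]
  intro hdvd
  have hd : p ∣ q.num.natAbs := Int.natCast_dvd_natCast.mp (by rwa [Int.dvd_natAbs])
  have hpos : 0 < q.num.natAbs := Int.natAbs_pos.mpr (Rat.num_ne_zero.mpr hq)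
  exact absurd (Nat.le_of_dvd hpos hd) (not_le.mpr h1)

def polyBound (P : Polynomial ℚ) : ℕ :=
  (Finset.range (P.natDegree + 1)).sup
    (fun i => max (P.coeff i).num.natAbs (P.coeff i).den)

lemma coeff_norm_le_one {P : Polynomial ℚ} {p : ℕ} (hp : p.Prime)
    (h : polyBound P < p) (i : ℕ) : padicNorm p (P.coeff i) ≤ 1 := by
  by_cases hi : i ≤ P.natDegree
  · apply padicNorm_le_one_of_den_lt hp
    calc (P.coeff i).den ≤ max (P.coeff i).num.natAbs (P.coeff i).den := le_max_right _ _
      _ ≤ polyBound P := Finset.le_sup (f := fun i => max (P.coeff i).num.natAbs (P.coeff i).den) (Finset.mem_range.mpr (Nat.lt_succ_of_le hi))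
      _ < p := h
  · rw [Polynomial.coeff_eq_zero_of_natDegree_lt (not_le.mp hi), padicNorm.zero]
    exact zero_le_one

lemma lead_norm_eq_one {P : Polynomial ℚ} (hP : P ≠ 0) {p : ℕ} (hp : p.Prime)
    (h : polyBound P < p) : padicNorm p P.leadingCoeff = 1 := by
  have hmem : P.natDegree ∈ Finset.range (P.natDegree + 1) :=
    Finset.mem_range.mpr (Nat.lt_succ_self _)
  have h1 : (P.leadingCoeff).num.natAbs < p :=
    lt_of_le_of_lt (le_trans (le_max_left _ _) (Finset.le_sup (f := fun i => max (P.coeff i).num.natAbs (P.coeff i).den) hmem)) h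
  have h2 : (P.leadingCoeff).den < p :=
    lt_of_le_of_lt (le_trans (le_max_right _ _) (Finset.le_sup (f := fun i => max (P.coeff i).num.natAbs (P.coeff i).den) hmem)) h
  exact padicNorm_eq_one_of_lt hp (Polynomial.leadingCoeff_ne_zero.mpr hP) h1 h2

lemma eval_norm_le_one {P : Polynomial ℚ} {p : ℕ} (hp : p.Prime)
    (h : polyBound P < p) {t : ℚ} (ht : padicNorm p t ≤ 1) :
    padicNorm p (P.eval t) ≤ 1 := by
  have : Fact p.Prime := ⟨hp⟩
  rw [Polynomial.eval_eq_sum_range]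
  apply padicNorm.sum_le'
  · intro i _
    rw [padicNorm.mul, padicNorm_pow' hp]
    exact mul_le_one₀ (coeff_norm_le_one hp h i) (pow_nonneg (padicNorm.nonneg _) _)
      (pow_le_one₀ (padicNorm.nonneg _) ht)
  · exact zero_le_one

lemma one_le_eval_norm {P : Polynomial ℚ} (hP : P ≠ 0) {p : ℕ} (hp : p.Prime)
    (h : polyBound P < p) {t : ℚ} (ht : 1 < padicNorm p t) :
    1 ≤ padicNorm p (P.eval t) := by
  have : Fact p.Prime := ⟨hp⟩
  set n := P.natDegree with hn
  have htpos : 0 < padicNorm p t ^ n := pow_pos (lt_trans zero_lt_one ht) n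
  rw [Polynomial.eval_eq_sum_range, Finset.sum_range_succ]
  have h1 : padicNorm p (P.coeff n * t ^ n) = padicNorm p t ^ n := by
    rw [padicNorm.mul, padicNorm_pow' hp, ← Polynomial.leadingCoeff,
      lead_norm_eq_one hP hp h, one_mul]
  have h2 : padicNorm p (∑ i ∈ Finset.range n, P.coeff i * t ^ i)
      < padicNorm p t ^ n := by
    apply padicNorm.sum_lt' _ htpos
    intro i hi
    rw [padicNorm.mul, padicNorm_pow' hp]
    calc padicNorm p (P.coeff i) * padicNorm p t ^ i
        ≤ 1 * padicNorm p t ^ i :=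
          mul_le_mul_of_nonneg_right (coeff_norm_le_one hp h i) (by positivity)
      _ = padicNorm p t ^ i := one_mul _
      _ < padicNorm p t ^ n := pow_lt_pow_right₀ ht (Finset.mem_range.mp hi)
  rw [padicNorm.add_eq_max_of_ne (by rw [h1]; exact ne_of_lt h2), h1,
    max_eq_right (le_of_lt (h1 ▸ h2))]
  exact one_le_pow₀ (le_of_lt ht)

theorem padic_lower_bound_one_large_primes
    (f g : Polynomial ℚ) (hf : f ≠ 0) (hg : g ≠ 0) (hfg : IsCoprime f g) :
    ∃ N : ℕ, ∀ p : ℕ, p.Prime → N < p → ∀ t : ℚ,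
      1 ≤ max (padicNorm p (f.eval t)) (padicNorm p (g.eval t)) := by
  obtain ⟨a, b, hab⟩ := hfg
  refine ⟨max (max (polyBound f) (polyBound g)) (max (polyBound a) (polyBound b)),
    fun p hp hN t => ?_⟩
  have : Fact p.Prime := ⟨hp⟩
  have hNf : polyBound f < p := lt_of_le_of_lt (le_trans (le_max_left _ _) (le_max_left _ _)) hN
  have hNg : polyBound g < p := lt_of_le_of_lt (le_trans (le_max_right _ _) (le_max_left _ _)) hN
  have hNa : polyBound a < p := lt_of_le_of_lt (le_trans (le_max_left _ _) (le_max_right _ _)) hN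
  have hNb : polyBound b < p := lt_of_le_of_lt (le_trans (le_max_right _ _) (le_max_right _ _)) hN
  by_cases ht : padicNorm p t ≤ 1
  · have key : padicNorm p (a.eval t * f.eval t + b.eval t * g.eval t) = 1 := by
      rw [← Polynomial.eval_mul, ← Polynomial.eval_mul, ← Polynomial.eval_add, hab,
        Polynomial.eval_one, padicNorm.one]
    calc (1 : ℚ) = padicNorm p (a.eval t * f.eval t + b.eval t * g.eval t) := key.symm
      _ ≤ max (padicNorm p (a.eval t * f.eval t)) (padicNorm p (b.eval t * g.eval t)) :=
          padicNorm.nonarchimedean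
      _ ≤ max (padicNorm p (f.eval t)) (padicNorm p (g.eval t)) := by
          apply max_le_max
          · rw [padicNorm.mul]
            exact mul_le_of_le_one_left (padicNorm.nonneg _) (eval_norm_le_one hp hNa ht)
          · rw [padicNorm.mul]
            exact mul_le_of_le_one_left (padicNorm.nonneg _) (eval_norm_le_one hp hNb ht)
  · exact le_trans (one_le_eval_norm hf hp hNf (not_le.mp ht)) (le_max_left _ _)
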